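/- arXiv:1102.4083 — 2 statements merged into one kernel-verified Lean document; each statement's English description precedes it below -/
import Mathlib

section
/- Let Φ be an irreducible reduced root system with a fixed choice of simple roots. If x is a dominant weight and α is a positive root such that playing the usual numbers game on ι(x + α) never fires a vertex corresponding to a simple root strictly shorter than α, then x + α is winning for the numbers game with a cutoff. In particular, if α is a short positive root and x is dominant, then x + α is winning. -/
open scoped BigOperators

variable {V : Type*} [NormedAddCommGroup V] [InnerProductSpace ℝ V]

/-- The pairing `⟨x, y^∨⟩ = 2(x,y)/(y,y)` of `x` with the coroot of `y`. -/
noncomputable def pairing (x y : V) : ℝ := 2 * (inner ℝ x y : ℝ) / (inner ℝ y y : ℝ)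

/-- An irreducible, reduced, crystallographic root system in a Euclidean space `V`. -/
structure RootSystemData (V : Type*) [NormedAddCommGroup V] [InnerProductSpace ℝ V] :
    Type _ where
  Δ : Set V
  finite : Δ.Finite
  nonzero : ∀ α ∈ Δ, α ≠ 0
  spanning : Submodule.span ℝ Δ = ⊤
  neg_mem : ∀ α ∈ Δ, -α ∈ Δ
  reduced : ∀ α ∈ Δ, ∀ c : ℝ, c • α ∈ Δ → c = 1 ∨ c = -1
  crystallographic : ∀ α ∈ Δ, ∀ β ∈ Δ, ∃ n : ℤ, pairing α β = n
  reflect_mem : ∀ α ∈ Δ, ∀ β ∈ Δ, β - pairing β α • α ∈ Δ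
  irreducible : ∀ s t : Set V, s ∪ t = Δ →
    (∀ α ∈ s, ∀ β ∈ t, (inner ℝ α β : ℝ) = 0) → s = ∅ ∨ t = ∅

variable {R : RootSystemData V}

/-- A base (system of simple roots) of the root system, corresponding to a Weyl chamber. -/
structure Base (R : RootSystemData V) where
  S : Finset V
  subset : ↑S ⊆ R.Δ
  indep : LinearIndependent ℝ ((↑) : {x : V // x ∈ S} → V)
  decomp : ∀ α ∈ R.Δ, ∃ c : V → ℤ, α = ∑ β ∈ S, (c β : ℝ) • β ∧
    ((∀ β ∈ S, 0 ≤ c β) ∨ (∀ β ∈ S, c β ≤ 0))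

/-- `x` is dominant with respect to the chamber given by the base `B`. -/
def IsDominant (B : Base R) (x : V) : Prop := ∀ α ∈ B.S, 0 ≤ pairing x α

/-- `β` is a positive root with respect to the base `B`. -/
def Base.IsPos (B : Base R) (β : V) : Prop :=
  β ∈ R.Δ ∧ ∃ c : V → ℕ, β = ∑ α ∈ B.S, (c α : ℝ) • α

/-- The dominance order: `y - x` is a nonnegative integer combination of simple roots. -/
def domLE (B : Base R) (x y : V) : Prop :=
  ∃ c : V → ℕ, y - x = ∑ α ∈ B.S, (c α : ℝ) • α

/-- `x` is a weight: its pairing with every coroot is an integer. -/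
def IsWeight (R : RootSystemData V) (x : V) : Prop :=
  ∀ α ∈ R.Δ, ∃ n : ℤ, pairing x α = n

/-- An ample (`T`-equivariant ample) polytope for the toric variety of the Weyl fan:
vertices `μ B` indexed by Weyl chambers (equivalently, bases `B`), such that vertices at
adjacent chambers differ by a positive integer multiple of the separating root. The chamber
adjacent to `B` across the wall of the simple root `α ∈ B.S` is the one whose base is the
reflection `s_α(B)`. -/
structure AmplePolytope (R : RootSystemData V) where
  μ : Base R → V
  weight : ∀ B : Base R, IsWeight R (μ B)
  ample : ∀ B B' : Base R, ∀ α ∈ B.S,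
    (∀ β : V, β ∈ B'.S ↔ ∃ γ ∈ B.S, β = γ - pairing γ α • α) →
    ∃ r : ℤ, 0 < r ∧ μ B - μ B' = (r : ℝ) • α

/-- The polytope `P` itself: the convex hull of its vertices. -/
noncomputable def AmplePolytope.carrier (P : AmplePolytope R) : Set V :=
  convexHull ℝ (Set.range P.μ)

/-- The root lattice `Y`. -/
def rootLattice (R : RootSystemData V) : AddSubgroup V := AddSubgroup.closure R.Δ

/-- `Λ(P)`: the lattice points of `P` lying in the coset `Y + μ_σ` of the root lattice. -/
noncomputable def latticePts (P : AmplePolytope R) : Set V :=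
  {x | x ∈ P.carrier ∧ ∀ B : Base R, x - P.μ B ∈ rootLattice R}

/-- The polytope is special: each vertex is dominant for its own chamber. -/
def IsSpecial (P : AmplePolytope R) : Prop := ∀ B : Base R, ∀ α ∈ B.S, 0 ≤ pairing (P.μ B) α

/-- One step of the numbers game: firing the vertex corresponding to the simple root `α`
replaces `x` by its reflection `x - ⟨x, α^∨⟩ α`. -/
noncomputable def fireRoot (x α : V) : V := x - pairing x α • α

/-- The result of playing the firing sequence `l` starting from `x`. -/
noncomputable def playRes (x : V) (l : List V) : V := l.foldl fireRoot x

/-- Legality of a firing sequence for the usual numbers game: each fired simple root has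
negative amplitude when fired. -/
def NGLegal (B : Base R) : V → List V → Prop
  | _, [] => True
  | x, α :: t => α ∈ B.S ∧ pairing x α < 0 ∧ NGLegal B (fireRoot x α) t

/-- A configuration is allowed in the numbers game with a cutoff: all amplitudes `≥ -1`. -/
def AllowedConf (B : Base R) (x : V) : Prop := ∀ α ∈ B.S, -1 ≤ pairing x α

/-- Legality for the numbers game with a cutoff: fired amplitudes are negative, and every
configuration along the way (including the first and last) is allowed. -/
def CutoffLegal (B : Base R) : V → List V → Prop
  | x, [] => AllowedConf B x
  | x, α :: t => AllowedConf B x ∧ α ∈ B.S ∧ pairing x α < 0 ∧ CutoffLegal B (fireRoot x α) t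

/-- `x` is winning for the numbers game with a cutoff. -/
def CutoffWinning (B : Base R) (x : V) : Prop :=
  ∃ l : List V, CutoffLegal B x l ∧ IsDominant B (playRes x l)

/-- The winning criterion: `⟨x, β^∨⟩ ≥ -1` for all positive roots `β`. -/
def WinningCrit (B : Base R) (x : V) : Prop := ∀ β : V, B.IsPos β → -1 ≤ pairing x β

/-- `α` is `P`-progressive for `x`: either `x` is dominant and `α` has minimum length among
simple roots with `x + α ⪯ μ`, or `⟨x, α^∨⟩ ≤ -1`. -/
def Progressive (B : Base R) (P : AmplePolytope R) (x α : V) : Prop :=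
  α ∈ B.S ∧
    ((IsDominant B x ∧ domLE B (x + α) (P.μ B) ∧
        ∀ β ∈ B.S, domLE B (x + β) (P.μ B) → ‖α‖ ≤ ‖β‖) ∨
      pairing x α ≤ -1)

/-!
Induct on the height of `α`. If `x + α` is not dominant, some simple root `β` has
`⟨x + α, β^∨⟩ < 0`, and by hypothesis `‖α‖ ≤ ‖β‖`. For roots `α ≠ -β` with `‖α‖ ≤ ‖β‖` one has
`⟨α, β^∨⟩ ≥ -1`, since `⟨α, β^∨⟩ ≤ -2` would force `‖α + β‖² ≤ 0`. As `x` is a dominant weight, this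
pins down `⟨x, β^∨⟩ = 0` and `⟨α, β^∨⟩ = -1`, so firing `β` turns `x + α` into `x + (α + β)` with
`α + β` a positive root of the same length and larger height, and the same estimate shows that every
configuration met on the way is allowed. Heights of roots are bounded, so the game ends.
-/

lemma pairing_add_left (x y z : V) : pairing (x + y) z = pairing x z + pairing y z := by
  simp only [pairing, inner_add_left]
  ring

lemma pairing_mul_norm_sq (x : V) {β : V} (hβ : β ≠ 0) :
    pairing x β * ‖β‖ ^ 2 = 2 * inner ℝ x β := by
  rw [pairing, real_inner_self_eq_norm_sq]
  field_simp

lemma fireRoot_add_left (x y β : V) : fireRoot (x + y) β = fireRoot x β + fireRoot y β := by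
  simp only [fireRoot, pairing_add_left, add_smul]
  abel

lemma fireRoot_of_pairing_eq_zero {x β : V} (h : pairing x β = 0) : fireRoot x β = x := by
  simp [fireRoot, h]

lemma fireRoot_of_pairing_eq_neg_one {x β : V} (h : pairing x β = -1) :
    fireRoot x β = x + β := by
  simp [fireRoot, h]

lemma norm_fireRoot (x : V) {β : V} (hβ : β ≠ 0) : ‖fireRoot x β‖ = ‖x‖ := by
  have h := pairing_mul_norm_sq x hβ
  have hsq : ‖fireRoot x β‖ ^ 2 = ‖x‖ ^ 2 := by
    rw [fireRoot, norm_sub_sq_real, real_inner_smul_right, norm_smul, mul_pow, Real.norm_eq_abs,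
      sq_abs]
    linear_combination pairing x β * h
  exact (sq_eq_sq₀ (norm_nonneg _) (norm_nonneg _)).mp hsq

lemma eq_neg_of_pairing_le_neg_two {α γ : V} (hp : pairing α γ ≤ -2) (hn : ‖α‖ ≤ ‖γ‖) :
    α = -γ := by
  have hγ : γ ≠ 0 := by
    rintro rfl
    norm_num [pairing] at hp
  have h := pairing_mul_norm_sq α hγ
  have hsq : ‖α + γ‖ ^ 2 ≤ 0 := by
    rw [norm_add_sq_real]
    nlinarith [norm_nonneg α, sq_nonneg ‖γ‖]
  exact eq_neg_of_add_eq_zero_left (norm_eq_zero.mp (by nlinarith [norm_nonneg (α + γ)]))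

lemma neg_one_le_pairing_of_norm_le {α γ : V} (hα : α ∈ R.Δ) (hγ : γ ∈ R.Δ) (hne : α ≠ -γ)
    (hn : ‖α‖ ≤ ‖γ‖) : -1 ≤ pairing α γ := by
  obtain ⟨n, hn'⟩ := R.crystallographic α hα γ hγ
  by_contra! hlt
  have hn2 : n ≤ -2 := by
    rw [hn'] at hlt
    have : n < -1 := by exact_mod_cast hlt
    omega
  exact hne (eq_neg_of_pairing_le_neg_two (by rw [hn']; exact_mod_cast hn2) hn)

lemma LinearIndepOn.exists_linearMap_eq_one {K M : Type*} [DivisionRing K] [AddCommGroup M]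
    [Module K M] {s : Set M} (hs : LinearIndepOn K id s) : ∃ f : M →ₗ[K] K, ∀ v ∈ s, f v = 1 := by
  let b := Module.Basis.extend hs
  refine ⟨b.sumCoords, fun v hv => ?_⟩
  have hv' := hs.subset_extend (Set.subset_univ s) hv
  simpa [b, Module.Basis.extend_apply_self] using b.sumCoords_self_apply ⟨v, hv'⟩

lemma Base.exists_height (B : Base R) : ∃ f : V →ₗ[ℝ] ℝ, ∀ β ∈ B.S, f β = 1 :=
  LinearIndepOn.exists_linearMap_eq_one (show LinearIndepOn ℝ id (B.S : Set V) from B.indep)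

lemma Base.IsPos.height_nonneg {B : Base R} {α : V} (hα : B.IsPos α) {f : V →ₗ[ℝ] ℝ}
    (hf : ∀ β ∈ B.S, f β = 1) : 0 ≤ f α := by
  obtain ⟨-, c, rfl⟩ := hα
  simp only [map_sum, map_smul, smul_eq_mul]
  exact Finset.sum_nonneg fun β hβ => by rw [hf β hβ]; positivity

lemma Base.IsPos.ne_neg_of_mem {B : Base R} {α γ : V} (hα : B.IsPos α) (hγ : γ ∈ B.S) :
    α ≠ -γ := by
  obtain ⟨f, hf⟩ := B.exists_height
  rintro rfl
  have := hα.height_nonneg hf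
  rw [map_neg, hf γ hγ] at this
  linarith

lemma Base.IsPos.add_of_mem {B : Base R} {α β : V} (hα : B.IsPos α) (hβ : β ∈ B.S)
    (hαβ : α + β ∈ R.Δ) : B.IsPos (α + β) := by
  classical
  obtain ⟨-, c, rfl⟩ := hα
  refine ⟨hαβ, c + Pi.single β 1, ?_⟩
  simp [Pi.single_apply, add_smul, Finset.sum_add_distrib, hβ]

lemma pairing_eq_zero_and_pairing_eq_neg_one {B : Base R} {x α β : V} (hx : IsWeight R x)
    (hxd : IsDominant B x) (hα : B.IsPos α) (hβ : β ∈ B.S) (hneg : pairing (x + α) β < 0)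
    (hn : ‖α‖ ≤ ‖β‖) : pairing x β = 0 ∧ pairing α β = -1 := by
  obtain ⟨n₁, hn₁⟩ := hx β (B.subset hβ)
  obtain ⟨n₂, hn₂⟩ := R.crystallographic α hα.1 β (B.subset hβ)
  have h₁ : 0 ≤ n₁ := by exact_mod_cast hn₁ ▸ hxd β hβ
  have h₂ : -1 ≤ n₂ := by
    exact_mod_cast hn₂ ▸ neg_one_le_pairing_of_norm_le hα.1 (B.subset hβ) (hα.ne_neg_of_mem hβ) hn
  have h₁₂ : n₁ + n₂ < 0 := by
    rw [pairing_add_left, hn₁, hn₂] at hneg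
    exact_mod_cast hneg
  rw [hn₁, hn₂]
  constructor <;> norm_cast <;> omega

lemma allowedConf_add {B : Base R} {x α : V} (hxd : IsDominant B x) (hα : B.IsPos α)
    (hshort : ∀ γ ∈ B.S, pairing (x + α) γ < 0 → ‖α‖ ≤ ‖γ‖) : AllowedConf B (x + α) := by
  intro γ hγ
  by_cases hneg : pairing (x + α) γ < 0
  · have := neg_one_le_pairing_of_norm_le hα.1 (B.subset hγ) (hα.ne_neg_of_mem hγ)
      (hshort γ hγ hneg)
    rw [pairing_add_left]
    linarith [hxd γ hγ]
  · linarith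

lemma NGLegal.mem {B : Base R} : ∀ {x : V} {l : List V}, NGLegal B x l → ∀ β ∈ l, β ∈ B.S
  | _, [], _, _, hβ => absurd hβ List.not_mem_nil
  | _, _ :: _, ⟨hγ, _, ht⟩, _, hβ => by
    rcases List.mem_cons.mp hβ with rfl | hβ
    · exact hγ
    · exact ht.mem _ hβ

lemma cutoffWinning_of_isDominant {B : Base R} {y : V} (h : IsDominant B y) :
    CutoffWinning B y :=
  ⟨[], fun α hα => by linarith [h α hα], h⟩

lemma CutoffWinning.of_fireRoot {B : Base R} {y β : V} (hy : AllowedConf B y) (hβ : β ∈ B.S)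
    (hneg : pairing y β < 0) (h : CutoffWinning B (fireRoot y β)) : CutoffWinning B y := by
  obtain ⟨l, hl, hdom⟩ := h
  exact ⟨β :: l, ⟨hy, hβ, hneg, hl⟩, hdom⟩

lemma cutoffWinning_add_of_lt_height {B : Base R} {x : V} (hx : IsWeight R x)
    (hxd : IsDominant B x) {f : V →ₗ[ℝ] ℝ} (hf : ∀ β ∈ B.S, f β = 1) {M : ℝ}
    (hM : ∀ γ ∈ R.Δ, f γ ≤ M) (n : ℕ) :
    ∀ α : V, B.IsPos α → M < f α + n →
      (∀ l : List V, NGLegal B (x + α) l → ∀ β ∈ l, ‖α‖ ≤ ‖β‖) →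
      CutoffWinning B (x + α) := by
  induction n with
  | zero =>
    intro α hα hlt _
    rw [Nat.cast_zero, add_zero] at hlt
    linarith [hM α hα.1]
  | succ n ih =>
    intro α hα hlt hshort
    by_cases hdom : IsDominant B (x + α)
    · exact cutoffWinning_of_isDominant hdom
    obtain ⟨β, hβ, hneg⟩ : ∃ β ∈ B.S, pairing (x + α) β < 0 := by
      simpa [IsDominant] using hdom
    have hfire_short : ∀ γ ∈ B.S, pairing (x + α) γ < 0 → ‖α‖ ≤ ‖γ‖ :=
      fun γ hγ hγneg => hshort [γ] ⟨hγ, hγneg, trivial⟩ γ (List.mem_singleton_self γ)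
    obtain ⟨hxβ, hαβ⟩ :=
      pairing_eq_zero_and_pairing_eq_neg_one hx hxd hα hβ hneg (hfire_short β hβ hneg)
    have hfire : fireRoot (x + α) β = x + (α + β) := by
      rw [fireRoot_add_left, fireRoot_of_pairing_eq_zero hxβ, fireRoot_of_pairing_eq_neg_one hαβ]
    have hroot : α + β ∈ R.Δ := by
      have := R.reflect_mem β (B.subset hβ) α hα.1
      change fireRoot α β ∈ R.Δ at this
      rwa [fireRoot_of_pairing_eq_neg_one hαβ] at this
    have hnorm : ‖α + β‖ = ‖α‖ := by
      rw [← fireRoot_of_pairing_eq_neg_one hαβ, norm_fireRoot α (R.nonzero β (B.subset hβ))]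
    refine CutoffWinning.of_fireRoot (allowedConf_add hxd hα hfire_short) hβ hneg ?_
    rw [hfire]
    refine ih (α + β) (hα.add_of_mem hβ hroot) ?_ fun l hl γ hγ => ?_
    · rw [map_add, hf β hβ]
      push_cast at hlt
      linarith
    · rw [hnorm]
      exact hshort (β :: l) ⟨hβ, hneg, hfire ▸ hl⟩ γ (List.mem_cons_of_mem β hγ)

theorem cutoffWinning_add_of_forall_ngLegal {B : Base R} {x α : V} (hx : IsWeight R x)
    (hxd : IsDominant B x) (hα : B.IsPos α)
    (hshort : ∀ l : List V, NGLegal B (x + α) l → ∀ β ∈ l, ‖α‖ ≤ ‖β‖) :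
    CutoffWinning B (x + α) := by
  obtain ⟨f, hf⟩ := B.exists_height
  obtain ⟨M, hM⟩ := (R.finite.image f).bddAbove
  refine cutoffWinning_add_of_lt_height hx hxd hf (fun γ hγ => hM ⟨γ, hγ, rfl⟩)
    (⌈M - f α⌉₊ + 1) α hα ?_ hshort
  push_cast
  linarith [Nat.le_ceil (M - f α)]

theorem stmt9_general {V : Type*} [NormedAddCommGroup V] [InnerProductSpace ℝ V]
    {R : RootSystemData V} (B : Base R) (x α : V)
    (hx : IsWeight R x) (hxd : IsDominant B x) (hα : B.IsPos α) :
    ((∀ l : List V, NGLegal B (x + α) l → ∀ β ∈ l, ‖α‖ ≤ ‖β‖) →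
      CutoffWinning B (x + α)) ∧
    ((∀ β ∈ R.Δ, ‖α‖ ≤ ‖β‖) → CutoffWinning B (x + α)) :=
  ⟨cutoffWinning_add_of_forall_ngLegal hx hxd hα, fun hshort =>
    cutoffWinning_add_of_forall_ngLegal hx hxd hα fun _ hl β hβ =>
      hshort β (B.subset (hl.mem β hβ))⟩

/-- If `x` is a dominant weight and `α` a positive root such that playing the
usual numbers game on `x + α` never fires a vertex corresponding to a simple root strictly
shorter than `α`, then `x + α` is winning for the numbers game with a cutoff.  In
particular, if `α` is short (of minimal length among roots), the hypothesis is automatic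
and `x + α` is winning. -/
theorem stmt9 {V : Type*} [NormedAddCommGroup V] [InnerProductSpace ℝ V]
    [FiniteDimensional ℝ V] {R : RootSystemData V} (B : Base R) (x α : V)
    (hx : IsWeight R x) (hxd : IsDominant B x) (hα : B.IsPos α) :
    ((∀ l : List V, NGLegal B (x + α) l → ∀ β ∈ l, ‖α‖ ≤ ‖β‖) →
      CutoffWinning B (x + α)) ∧
    ((∀ β ∈ R.Δ, ‖α‖ ≤ ‖β‖) → CutoffWinning B (x + α)) :=
  stmt9_general B x α hx hxd hα
end

section
/- Let x ≺ y be dominant weights (in the dominance order for a fixed chamber), and let α be a positive root of minimum length such that x + α ⪯ y. Then x + α is winning for the numbers game with a cutoff, and if z is the resulting final (dominant) configuration, then x + α ⪯ z ⪯ y. -/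
open scoped BigOperators

variable {V : Type*} [NormedAddCommGroup V] [InnerProductSpace ℝ V]

variable {R : RootSystemData V}

/-!
The core is the winning criterion `⟨x + α, β^∨⟩ ≥ -1` for all positive roots `β`, by induction
on the height of `β`. If a simple root `γ` has `⟨x + α, γ^∨⟩ < 0`, then `α + γ` is a positive root
with `x + α + γ ⪯ y`, so the minimality of `‖α‖` forces `⟨α, γ^∨⟩ = -1` and `⟨x, γ^∨⟩ = 0`: thus
`x + α + γ = s_γ (x + α)` and `α + γ` is again of minimal length. Reflecting `β` in a simple root
`γ` with `⟨β, γ^∨⟩ > 0` lowers its height, and either does not increase the pairing (if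
`⟨x + α, γ^∨⟩ ≥ 0`) or leaves it unchanged once `α` is replaced by `α + γ`.

Under the criterion every legal move fires an amplitude of exactly `-1`, i.e. adds a simple root
`γ`; the criterion survives because `s_γ` permutes the other positive roots, and the configuration
stays below `y` because `⟨y - v, γ^∨⟩ > 0` and distinct simple roots are obtuse. The height of
`y - v` drops by one at each move, so the game ends, at a dominant configuration between `x + α`
and `y`.
-/

open scoped RealInnerProductSpace

section Pairing

lemma inner_eq_pairing_mul (v γ : V) : ⟪v, γ⟫ = pairing v γ * ⟪γ, γ⟫ / 2 := by
  rcases eq_or_ne γ 0 with rfl | hγ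
  · simp [pairing]
  · have : ⟪γ, γ⟫ ≠ 0 := inner_self_ne_zero.mpr hγ
    unfold pairing
    field_simp

lemma pairing_pos_iff {v γ : V} : 0 < pairing v γ ↔ 0 < ⟪v, γ⟫ := by
  rcases eq_or_ne γ 0 with rfl | hγ
  · simp [pairing]
  · have : 0 < ⟪γ, γ⟫ := real_inner_self_pos.mpr hγ
    rw [pairing, div_pos_iff_of_pos_right this]
    constructor <;> intro h <;> linarith

lemma pairing_nonneg_iff {v γ : V} : 0 ≤ pairing v γ ↔ 0 ≤ ⟪v, γ⟫ := by
  rcases eq_or_ne γ 0 with rfl | hγ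
  · simp [pairing]
  · have : 0 < ⟪γ, γ⟫ := real_inner_self_pos.mpr hγ
    rw [pairing, le_div_iff₀ this]
    constructor <;> intro h <;> linarith

lemma pairing_self {γ : V} (hγ : γ ≠ 0) : pairing γ γ = 2 := by
  have : ⟪γ, γ⟫ ≠ 0 := inner_self_ne_zero.mpr hγ
  unfold pairing
  field_simp

lemma pairing_add_left_s10 (v w γ : V) : pairing (v + w) γ = pairing v γ + pairing w γ := by
  simp only [pairing, inner_add_left]
  ring

lemma pairing_smul_left (t : ℝ) (v γ : V) : pairing (t • v) γ = t * pairing v γ := by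
  simp only [pairing, real_inner_smul_left]
  ring

lemma pairing_sub_left (v w γ : V) : pairing (v - w) γ = pairing v γ - pairing w γ := by
  simp only [pairing, inner_sub_left]
  ring

lemma inner_fireRoot_fireRoot (v w γ : V) :
    ⟪fireRoot v γ, fireRoot w γ⟫ = ⟪v, w⟫ := by
  simp only [fireRoot, inner_sub_left, inner_sub_right, real_inner_smul_left,
    real_inner_smul_right]
  rw [real_inner_comm w γ, inner_eq_pairing_mul v γ, inner_eq_pairing_mul w γ]
  ring

lemma pairing_fireRoot_fireRoot (v w γ : V) :
    pairing (fireRoot v γ) (fireRoot w γ) = pairing v w := by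
  simp only [pairing, inner_fireRoot_fireRoot]

lemma fireRoot_fireRoot {γ : V} (hγ : γ ≠ 0) (v : V) : fireRoot (fireRoot v γ) γ = v := by
  rw [fireRoot, fireRoot, pairing_sub_left, pairing_smul_left, pairing_self hγ]
  module

lemma fireRoot_eq_add {v γ : V} (h : pairing v γ = -1) : fireRoot v γ = v + γ := by
  rw [fireRoot, h, neg_one_smul, sub_neg_eq_add]

lemma pairing_fireRoot_le {v β γ : V} (hv : 0 ≤ pairing v γ) (hβ : 0 ≤ pairing β γ) :
    pairing v (fireRoot β γ) ≤ pairing v β := by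
  rw [pairing, pairing, inner_fireRoot_fireRoot]
  gcongr
  · exact real_inner_self_nonneg
  · rw [fireRoot, inner_sub_right, real_inner_smul_right]
    have := pairing_nonneg_iff.mp hv
    nlinarith

lemma norm_add_sq_eq (α γ : V) :
    ‖α + γ‖ ^ 2 = ‖α‖ ^ 2 + (pairing α γ + 1) * ‖γ‖ ^ 2 := by
  rw [norm_add_sq_real, ← real_inner_self_eq_norm_sq γ, inner_eq_pairing_mul α γ]
  ring

lemma norm_le_norm_add_iff {α γ : V} (hγ : γ ≠ 0) : ‖α‖ ≤ ‖α + γ‖ ↔ -1 ≤ pairing α γ := by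
  have : 0 < ‖γ‖ ^ 2 := by positivity
  rw [← sq_le_sq₀ (norm_nonneg _) (norm_nonneg _), norm_add_sq_eq]
  constructor <;> intro h <;> nlinarith

lemma norm_add_le_norm_iff {α γ : V} (hγ : γ ≠ 0) : ‖α + γ‖ ≤ ‖α‖ ↔ pairing α γ ≤ -1 := by
  have : 0 < ‖γ‖ ^ 2 := by positivity
  rw [← sq_le_sq₀ (norm_nonneg _) (norm_nonneg _), norm_add_sq_eq]
  constructor <;> intro h <;> nlinarith

end Pairing

section RootSystem

lemma eq_neg_one_of_intCast {t : ℝ} (ht : ∃ n : ℤ, t = n) (hneg : t < 0) (hle : -1 ≤ t) :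
    t = -1 := by
  obtain ⟨n, rfl⟩ := ht
  have h₁ : n < 0 := by exact_mod_cast hneg
  have h₂ : -1 ≤ n := by exact_mod_cast hle
  have : n = -1 := by omega
  simp [this]

lemma IsWeight.add_root {v β : V} (hv : IsWeight R v) (hβ : β ∈ R.Δ) : IsWeight R (v + β) := by
  intro ρ hρ
  obtain ⟨n, hn⟩ := hv ρ hρ
  obtain ⟨m, hm⟩ := R.crystallographic β hβ ρ hρ
  exact ⟨n + m, by rw [pairing_add_left_s10, hn, hm]; push_cast; ring⟩

lemma pairing_mul_pairing_lt_four {α γ : V} (hα : α ∈ R.Δ) (hγ : γ ∈ R.Δ) (h₁ : α ≠ γ)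
    (h₂ : α ≠ -γ) : pairing α γ * pairing γ α < 4 := by
  have hα0 := R.nonzero α hα
  have hγ0 := R.nonzero γ hγ
  have hCS : |⟪α, γ⟫| < ‖α‖ * ‖γ‖ := by
    refine (abs_real_inner_le_norm α γ).lt_of_ne fun h => ?_
    have : |⟪α, γ⟫ / (‖α‖ * ‖γ‖)| = 1 := by
      rw [abs_div, h, abs_of_nonneg (by positivity), div_self (by positivity)]
    obtain ⟨-, r, -, hr⟩ := (abs_real_inner_div_norm_mul_norm_eq_one_iff α γ).mp this
    rcases R.reduced α hα r (hr ▸ hγ) with rfl | rfl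
    · exact h₁ (by simpa using hr.symm)
    · exact h₂ (by simp [hr])
  have hprod : pairing α γ * pairing γ α = 4 * ⟪α, γ⟫ ^ 2 / (‖α‖ ^ 2 * ‖γ‖ ^ 2) := by
    simp only [pairing, real_inner_self_eq_norm_sq, real_inner_comm α γ]
    ring
  rw [hprod, div_lt_iff₀ (by positivity)]
  have := pow_lt_pow_left₀ hCS (abs_nonneg _) two_ne_zero
  rw [sq_abs] at this
  nlinarith

lemma add_mem_of_pairing_neg {α γ : V} (hα : α ∈ R.Δ) (hγ : γ ∈ R.Δ) (hneg : pairing α γ < 0)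
    (hne : α ≠ -γ) : α + γ ∈ R.Δ := by
  have hαγ : α ≠ γ := by
    rintro rfl
    rw [pairing_self (R.nonzero α hα)] at hneg
    norm_num at hneg
  have hneg' : pairing γ α < 0 := by
    rwa [← not_le, pairing_nonneg_iff, real_inner_comm, ← pairing_nonneg_iff, not_le]
  have hprod := pairing_mul_pairing_lt_four hα hγ hαγ hne
  obtain ⟨n, hn⟩ := R.crystallographic α hα γ hγ
  obtain ⟨m, hm⟩ := R.crystallographic γ hγ α hα
  rw [hn] at hneg hprod
  rw [hm] at hneg' hprod
  -- one of the two negative integer pairings is `-1`, and the corresponding reflection is `α + γ`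
  have : n = -1 ∨ m = -1 := by
    have h₁ : n < 0 := by exact_mod_cast hneg
    have h₂ : m < 0 := by exact_mod_cast hneg'
    have h₃ : n * m < 4 := by exact_mod_cast hprod
    by_contra! h
    have h₄ : n ≤ -2 := by omega
    have h₅ : m ≤ -2 := by omega
    nlinarith
  rcases this with rfl | rfl
  · simpa [hn, sub_eq_add_neg] using R.reflect_mem γ hγ α hα
  · simpa [hm, add_comm] using R.reflect_mem α hα γ hγ

end RootSystem

namespace Base

variable (B : Base R)

lemma coeff_eq {c d : V → ℝ} (h : ∑ δ ∈ B.S, c δ • δ = ∑ δ ∈ B.S, d δ • δ) :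
    ∀ δ ∈ B.S, c δ = d δ :=
  (linearIndepOn_finset_iffₛ (v := id) (s := B.S)).mp B.indep c d h

lemma sum_single_smul [DecidableEq V] {γ : V} (hγ : γ ∈ B.S) (t : ℝ) :
    ∑ δ ∈ B.S, (Pi.single γ t : V → ℝ) δ • δ = t • γ := by
  simp [Pi.single_apply, ite_smul, hγ]

lemma sum_natCast_single_smul [DecidableEq V] {γ : V} (hγ : γ ∈ B.S) :
    ∑ δ ∈ B.S, ((Pi.single γ 1 : V → ℕ) δ : ℝ) • δ = γ := by
  simp [Pi.single_apply, ite_smul, hγ]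

lemma isPos_of_coeff_pos {ρ : V} (hρ : ρ ∈ R.Δ) {r : V → ℝ} (hr : ρ = ∑ δ ∈ B.S, r δ • δ)
    {δ₀ : V} (hδ₀ : δ₀ ∈ B.S) (hpos : 0 < r δ₀) : B.IsPos ρ := by
  obtain ⟨e, he, hsign⟩ := B.decomp ρ hρ
  have hcoeff := B.coeff_eq (he.symm.trans hr)
  have hnonneg : ∀ δ ∈ B.S, 0 ≤ e δ := hsign.resolve_right fun h => by
    have : (e δ₀ : ℝ) ≤ 0 := by exact_mod_cast h δ₀ hδ₀
    linarith [hcoeff δ₀ hδ₀]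
  refine ⟨hρ, fun δ => (e δ).toNat, he.trans (Finset.sum_congr rfl fun δ hδ => ?_)⟩
  rw [show ((e δ).toNat : ℝ) = e δ by exact_mod_cast Int.toNat_of_nonneg (hnonneg δ hδ)]

lemma inner_nonpos {γ δ : V} (hγ : γ ∈ B.S) (hδ : δ ∈ B.S) (hne : γ ≠ δ) : ⟪γ, δ⟫ ≤ 0 := by
  classical
  by_contra! hpos
  obtain ⟨n, hn⟩ := R.crystallographic γ (B.subset hγ) δ (B.subset hδ)
  have hn0 : (0 : ℝ) < n := hn ▸ pairing_pos_iff.mpr hpos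
  set r : V → ℝ := Pi.single γ 1 - Pi.single δ (n : ℝ)
  have hr : γ - pairing γ δ • δ = ∑ ε ∈ B.S, r ε • ε := by
    simp only [r, Pi.sub_apply, sub_smul, Finset.sum_sub_distrib, B.sum_single_smul hγ,
      B.sum_single_smul hδ, hn, one_smul]
  -- `s_δ γ = γ - n δ` would be a positive root with coefficient `-n < 0` at `δ`
  obtain ⟨-, c, hc⟩ := B.isPos_of_coeff_pos (R.reflect_mem δ (B.subset hδ) γ (B.subset hγ)) hr hγ
    (by simp [r, hne])
  have := B.coeff_eq (hc.symm.trans hr) δ hδ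
  simp only [r, Pi.sub_apply, Pi.single_eq_same, Pi.single_eq_of_ne' hne] at this
  linarith [(c δ).cast_nonneg (α := ℝ)]

lemma coeff_pos_of_inner_pos {c : V → ℕ} {γ : V} (hγ : γ ∈ B.S)
    (h : 0 < ⟪∑ δ ∈ B.S, (c δ : ℝ) • δ, γ⟫) : 0 < c γ := by
  by_contra! h0
  rw [sum_inner] at h
  refine h.not_ge (Finset.sum_nonpos fun δ hδ => ?_)
  rw [real_inner_smul_left]
  rcases eq_or_ne δ γ with rfl | hne
  · simp [Nat.le_zero.mp h0]
  · exact mul_nonpos_of_nonneg_of_nonpos (Nat.cast_nonneg _) (B.inner_nonpos hδ hγ hne)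

noncomputable def height : V →ₗ[ℝ] ℝ :=
  (Module.Basis.extend (s := (B.S : Set V)) B.indep).constr ℝ fun _ => 1

lemma height_of_mem {δ : V} (hδ : δ ∈ B.S) : B.height δ = 1 := by
  let b := Module.Basis.extend (s := (B.S : Set V)) B.indep
  have hb : b ⟨δ, Module.Basis.subset_extend B.indep hδ⟩ = δ := Module.Basis.extend_apply_self _ _
  rw [height, ← hb]
  exact b.constr_basis ℝ _ _

lemma height_sum (c : V → ℕ) : B.height (∑ δ ∈ B.S, (c δ : ℝ) • δ) = ∑ δ ∈ B.S, (c δ : ℝ) := by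
  simp only [map_sum, map_smul, smul_eq_mul]
  exact Finset.sum_congr rfl fun δ hδ => by rw [B.height_of_mem hδ, mul_one]

lemma height_fireRoot {v γ : V} (hγ : γ ∈ B.S) :
    B.height (fireRoot v γ) = B.height v - pairing v γ := by
  simp [fireRoot, B.height_of_mem hγ]

end Base

section DominanceOrder

variable (B : Base R)

lemma domLE_refl (v : V) : domLE B v v := ⟨0, by simp⟩

lemma domLE_add_simple {u v γ : V} (h : domLE B u v) (hγ : γ ∈ B.S) : domLE B u (v + γ) := by
  classical
  obtain ⟨c, hc⟩ := h
  refine ⟨c + Pi.single γ 1, ?_⟩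
  simp only [Pi.add_apply, Nat.cast_add, add_smul, Finset.sum_add_distrib, ← hc,
    B.sum_natCast_single_smul hγ]
  abel

lemma domLE_add_simple_of_pairing_lt {v y γ : V} (h : domLE B v y) (hγ : γ ∈ B.S)
    (hlt : pairing v γ < pairing y γ) : domLE B (v + γ) y := by
  classical
  obtain ⟨c, hc⟩ := h
  have hcγ : 0 < c γ := B.coeff_pos_of_inner_pos hγ <| by
    rw [← hc, ← pairing_pos_iff, pairing_sub_left]
    linarith
  have hle : ∀ δ, (Pi.single γ 1 : V → ℕ) δ ≤ c δ := fun δ => by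
    rcases eq_or_ne δ γ with rfl | hne
    · simpa using Nat.one_le_iff_ne_zero.mpr hcγ.ne'
    · simp [hne]
  refine ⟨c - Pi.single γ 1, ?_⟩
  simp only [Pi.sub_apply, Nat.cast_sub (hle _), sub_smul, Finset.sum_sub_distrib, ← hc,
    B.sum_natCast_single_smul hγ]
  abel

lemma exists_height_eq_natCast_of_domLE {u v : V} (h : domLE B u v) :
    ∃ n : ℕ, B.height (v - u) = n := by
  obtain ⟨c, hc⟩ := h
  exact ⟨∑ δ ∈ B.S, c δ, by rw [hc, B.height_sum]; push_cast; rfl⟩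

end DominanceOrder

namespace Base

variable {B : Base R}

namespace IsPos

lemma domLE_zero {β : V} (hβ : B.IsPos β) : domLE B 0 β := by
  obtain ⟨-, c, hc⟩ := hβ
  exact ⟨c, by rwa [sub_zero]⟩

lemma of_domLE_zero {β : V} (hβ : β ∈ R.Δ) (h : domLE B 0 β) : B.IsPos β := by
  obtain ⟨c, hc⟩ := h
  exact ⟨hβ, c, by rwa [sub_zero] at hc⟩

lemma add_simple {β γ : V} (hβ : B.IsPos β) (hγ : γ ∈ B.S) (hmem : β + γ ∈ R.Δ) :
    B.IsPos (β + γ) :=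
  .of_domLE_zero hmem (domLE_add_simple B hβ.domLE_zero hγ)

lemma exists_height_eq_natCast {β : V} (hβ : B.IsPos β) : ∃ n : ℕ, B.height β = n := by
  simpa using exists_height_eq_natCast_of_domLE B hβ.domLE_zero

lemma height_pos {β : V} (hβ : B.IsPos β) : 0 < B.height β := by
  obtain ⟨hβΔ, c, hc⟩ := hβ
  rw [hc, B.height_sum]
  refine (Finset.sum_nonneg fun δ _ => Nat.cast_nonneg (c δ)).lt_of_ne fun h => ?_
  have hc0 := (Finset.sum_eq_zero_iff_of_nonneg fun δ _ => Nat.cast_nonneg (c δ)).mp h.symm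
  exact R.nonzero β hβΔ (by rw [hc]; exact Finset.sum_eq_zero fun δ hδ => by simp [hc0 δ hδ])

lemma ne_neg {α β : V} (hα : B.IsPos α) (hβ : B.IsPos β) : α ≠ -β := by
  rintro rfl
  have := hα.height_pos
  rw [map_neg] at this
  linarith [hβ.height_pos]

lemma exists_simple_pairing_pos {β : V} (hβ : B.IsPos β) : ∃ γ ∈ B.S, 0 < pairing β γ := by
  obtain ⟨hβΔ, c, hc⟩ := hβ
  have hβ0 : 0 < ⟪β, β⟫ := real_inner_self_pos.mpr (R.nonzero β hβΔ)
  nth_rw 2 [hc] at hβ0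
  rw [inner_sum, ← Finset.sum_const_zero] at hβ0
  obtain ⟨γ, hγ, hpos⟩ := Finset.exists_lt_of_sum_lt hβ0
  rw [real_inner_smul_right] at hpos
  exact ⟨γ, hγ, pairing_pos_iff.mpr (pos_of_mul_pos_right hpos (Nat.cast_nonneg _))⟩

lemma fireRoot {β γ : V} (hβ : B.IsPos β) (hγ : γ ∈ B.S) (hne : β ≠ γ) :
    B.IsPos (fireRoot β γ) := by
  classical
  obtain ⟨hβΔ, b, hb⟩ := hβ
  -- `β` is not a multiple of `γ`, so it has a positive coefficient at another simple root
  obtain ⟨δ₀, hδ₀, hδ₀γ, hpos⟩ : ∃ δ₀ ∈ B.S, δ₀ ≠ γ ∧ 0 < b δ₀ := by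
    by_contra! h
    have hβγ : β = (b γ : ℝ) • γ := by
      rw [hb]
      exact Finset.sum_eq_single_of_mem γ hγ fun δ hδ hne => by
        simp [Nat.le_zero.mp (h δ hδ hne)]
    rcases R.reduced γ (B.subset hγ) _ (hβγ ▸ hβΔ) with h₁ | h₁
    · exact hne (by rw [hβγ, h₁, one_smul])
    · linarith [(b γ).cast_nonneg (α := ℝ)]
  refine B.isPos_of_coeff_pos (R.reflect_mem γ (B.subset hγ) β hβΔ)
    (r := fun δ => b δ - (Pi.single γ (pairing β γ) : V → ℝ) δ) ?_ hδ₀ (by simpa [hδ₀γ] using hpos)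
  simp only [sub_smul, Finset.sum_sub_distrib, B.sum_single_smul hγ, ← hb]
  rfl

end IsPos

lemma isPos_simple {γ : V} (hγ : γ ∈ B.S) : B.IsPos γ :=
  .of_domLE_zero (B.subset hγ) (by simpa using domLE_add_simple B (domLE_refl B 0) hγ)

end Base

/-- When `r` is the minimal length of the positive roots `β` with `x + β ⪯ y`, these are the
minimal ones. -/
def IsShortStep (B : Base R) (x y : V) (r : ℝ) (β : V) : Prop :=
  B.IsPos β ∧ domLE B (x + β) y ∧ ‖β‖ ≤ r

namespace IsShortStep

variable {B : Base R} {x y β : V} {r : ℝ}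

lemma pairing_eq_neg_one (hxw : IsWeight R x) (hxd : IsDominant B x) (hyd : IsDominant B y)
    (hmin : ∀ β, B.IsPos β → domLE B (x + β) y → r ≤ ‖β‖) (hβ : IsShortStep B x y r β)
    {γ : V} (hγ : γ ∈ B.S) (hneg : pairing (x + β) γ < 0) :
    pairing (x + β) γ = -1 ∧ IsShortStep B x y r (β + γ) := by
  obtain ⟨hβpos, hβy, hβr⟩ := hβ
  have hγΔ := B.subset hγ
  have hγ0 := R.nonzero γ hγΔ
  have hxγ := hxd γ hγ
  have hβγneg : pairing β γ < 0 := by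
    rw [pairing_add_left_s10] at hneg
    linarith
  have hpos := hβpos.add_simple hγ <|
    add_mem_of_pairing_neg hβpos.1 hγΔ hβγneg (hβpos.ne_neg (Base.isPos_simple hγ))
  have hdom : domLE B (x + (β + γ)) y := by
    rw [← add_assoc]
    exact domLE_add_simple_of_pairing_lt B hβy hγ (by linarith [hyd γ hγ])
  -- by minimality of `r`, `β + γ` is not shorter than `β`
  have hβγ : pairing β γ = -1 :=
    eq_neg_one_of_intCast (R.crystallographic β hβpos.1 γ hγΔ) hβγneg
      ((norm_le_norm_add_iff hγ0).mp (hβr.trans (hmin _ hpos hdom)))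
  refine ⟨eq_neg_one_of_intCast (hxw.add_root hβpos.1 γ hγΔ) hneg ?_, hpos, hdom,
    ((norm_add_le_norm_iff hγ0).mpr hβγ.le).trans hβr⟩
  rw [pairing_add_left_s10, hβγ]
  linarith

lemma winningCrit (hxw : IsWeight R x) (hxd : IsDominant B x) (hyd : IsDominant B y)
    (hmin : ∀ β, B.IsPos β → domLE B (x + β) y → r ≤ ‖β‖) (hβ : IsShortStep B x y r β) :
    WinningCrit B (x + β) := by
  intro ρ hρ
  obtain ⟨n, hn⟩ := hρ.exists_height_eq_natCast
  induction n using Nat.strong_induction_on generalizing β ρ with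
  | _ n ih =>
  obtain ⟨γ, hγ, hργ⟩ := hρ.exists_simple_pairing_pos
  by_cases hργ_eq : ρ = γ
  · subst hργ_eq
    rcases le_or_gt 0 (pairing (x + β) ρ) with h | h
    · linarith
    · exact (hβ.pairing_eq_neg_one hxw hxd hyd hmin hγ h).1.ge
  have hρ' := hρ.fireRoot hγ hργ_eq
  obtain ⟨m, hm⟩ := hρ'.exists_height_eq_natCast
  have hmn : m < n := by
    have := B.height_fireRoot (v := ρ) hγ
    rw [hm, hn] at this
    exact_mod_cast (show (m : ℝ) < n by linarith)
  rcases le_or_gt 0 (pairing (x + β) γ) with h | h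
  · exact (ih m hmn hβ _ hρ' hm).trans (pairing_fireRoot_le h hργ.le)
  · -- firing `γ` moves `x + β` to `x + (β + γ)`, which is again a short step
    obtain ⟨hfire, hβγ⟩ := hβ.pairing_eq_neg_one hxw hxd hyd hmin hγ h
    have := ih m hmn hβγ _ hρ' hm
    rwa [← add_assoc, ← fireRoot_eq_add hfire, pairing_fireRoot_fireRoot] at this

end IsShortStep

section NumbersGame

variable {B : Base R}

@[simp]
lemma playRes_cons (v γ : V) (l : List V) : playRes v (γ :: l) = playRes (fireRoot v γ) l := rfl

lemma AllowedConf.pairing_eq_neg_one {v γ : V} (hv : AllowedConf B v) (hvw : IsWeight R v)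
    (hγ : γ ∈ B.S) (hneg : pairing v γ < 0) : pairing v γ = -1 :=
  eq_neg_one_of_intCast (hvw γ (B.subset hγ)) hneg (hv γ hγ)

lemma WinningCrit.allowedConf {v : V} (hv : WinningCrit B v) : AllowedConf B v :=
  fun γ hγ => hv γ (Base.isPos_simple hγ)

lemma WinningCrit.add_simple {v γ : V} (hv : WinningCrit B v) (hγ : γ ∈ B.S)
    (h : pairing v γ = -1) : WinningCrit B (v + γ) := by
  intro ρ hρ
  have hγ0 := R.nonzero γ (B.subset hγ)
  by_cases hργ : ρ = γ
  · subst hργ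
    rw [pairing_add_left_s10, h, pairing_self hγ0]
    norm_num
  · -- `s_γ` permutes the positive roots other than `γ`
    have := hv _ (hρ.fireRoot hγ hργ)
    rwa [← pairing_fireRoot_fireRoot v _ γ, fireRoot_fireRoot hγ0, fireRoot_eq_add h] at this

lemma WinningCrit.cutoffWinning {v y : V} (hv : WinningCrit B v) (hvw : IsWeight R v)
    (hvy : domLE B v y) (hyd : IsDominant B y) : CutoffWinning B v := by
  obtain ⟨n, hn⟩ := exists_height_eq_natCast_of_domLE B hvy
  induction n using Nat.strong_induction_on generalizing v with
  | _ n ih =>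
  by_cases hvd : IsDominant B v
  · exact ⟨[], hv.allowedConf, hvd⟩
  obtain ⟨γ, hγ, hneg⟩ : ∃ γ ∈ B.S, pairing v γ < 0 := by
    simpa [IsDominant] using hvd
  have hfire := hv.allowedConf.pairing_eq_neg_one hvw hγ hneg
  have hvy' := domLE_add_simple_of_pairing_lt B hvy hγ (by linarith [hyd γ hγ])
  obtain ⟨m, hm⟩ := exists_height_eq_natCast_of_domLE B hvy'
  have hmn : m < n := by
    have : B.height (y - (v + γ)) = B.height (y - v) - 1 := by
      simp [sub_add_eq_sub_sub, B.height_of_mem hγ]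
    rw [hm, hn] at this
    exact_mod_cast (show (m : ℝ) < n by linarith)
  obtain ⟨l, hl, hld⟩ :=
    ih m hmn (hv.add_simple hγ hfire) (hvw.add_root (B.subset hγ)) hvy' hm
  refine ⟨γ :: l, ⟨hv.allowedConf, hγ, hneg, ?_⟩, ?_⟩
  · rwa [fireRoot_eq_add hfire]
  · rwa [playRes_cons, fireRoot_eq_add hfire]

lemma CutoffLegal.domLE_playRes {u v y : V} {l : List V} (hl : CutoffLegal B v l)
    (hvw : IsWeight R v) (huv : domLE B u v) (hvy : domLE B v y) (hyd : IsDominant B y) :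
    domLE B u (playRes v l) ∧ domLE B (playRes v l) y := by
  induction l generalizing v with
  | nil => exact ⟨huv, hvy⟩
  | cons γ l ih =>
    obtain ⟨hv, hγ, hneg, hl⟩ := hl
    have hfire := hv.pairing_eq_neg_one hvw hγ hneg
    rw [fireRoot_eq_add hfire] at hl
    rw [playRes_cons, fireRoot_eq_add hfire]
    exact ih hl (hvw.add_root (B.subset hγ)) (domLE_add_simple B huv hγ)
      (domLE_add_simple_of_pairing_lt B hvy hγ (by linarith [hyd γ hγ]))

end NumbersGame

theorem stmt10_general {V : Type*} [NormedAddCommGroup V] [InnerProductSpace ℝ V]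
    {R : RootSystemData V} (B : Base R) (x y α : V)
    (hxw : IsWeight R x)
    (hxd : IsDominant B x) (hyd : IsDominant B y)
    (hα : B.IsPos α) (hle : domLE B (x + α) y)
    (hmin : ∀ β : V, B.IsPos β → domLE B (x + β) y → ‖α‖ ≤ ‖β‖) :
    CutoffWinning B (x + α) ∧
    ∀ l : List V, CutoffLegal B (x + α) l → IsDominant B (playRes (x + α) l) →
      domLE B (x + α) (playRes (x + α) l) ∧ domLE B (playRes (x + α) l) y := by
  have hwin : WinningCrit B (x + α) :=
    IsShortStep.winningCrit hxw hxd hyd hmin ⟨hα, hle, le_rfl⟩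
  have hw : IsWeight R (x + α) := hxw.add_root hα.1
  exact ⟨hwin.cutoffWinning hw hle hyd,
    fun l hl _ => hl.domLE_playRes hw (domLE_refl B _) hle hyd⟩

/-- If `x ≺ y` are dominant weights and `α` is a positive root of minimum
length such that `x + α ⪯ y`, then `x + α` is winning for the numbers game with a cutoff,
and the resulting final dominant configuration `z` satisfies `x + α ⪯ z ⪯ y`. -/
theorem stmt10 {V : Type*} [NormedAddCommGroup V] [InnerProductSpace ℝ V]
    [FiniteDimensional ℝ V] {R : RootSystemData V} (B : Base R) (x y α : V)
    (hxw : IsWeight R x) (hyw : IsWeight R y)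
    (hxd : IsDominant B x) (hyd : IsDominant B y)
    (hlt : domLE B x y ∧ x ≠ y)
    (hα : B.IsPos α) (hle : domLE B (x + α) y)
    (hmin : ∀ β : V, B.IsPos β → domLE B (x + β) y → ‖α‖ ≤ ‖β‖) :
    CutoffWinning B (x + α) ∧
    ∀ l : List V, CutoffLegal B (x + α) l → IsDominant B (playRes (x + α) l) →
      domLE B (x + α) (playRes (x + α) l) ∧ domLE B (playRes (x + α) l) y :=
  stmt10_general B x y α hxw hxd hyd hα hle hmin
end
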